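/- arXiv:0803.0017 — 7 statements merged into one kernel-verified Lean document; each statement's English description precedes it below -/
import Mathlib

section
/- Let π be a group, ρ : π → π a group homomorphism, and k ≥ 1 an integer. Define the relation R on Fin k → π by: R x y if and only if there exists g : Fin k → π with y_i = g_i · x_i · (ρ(g_{i+1}))⁻¹ for all i (indices mod k). Then R is an equivalence relation, and every x : Fin k → π is R-related to the tuple (Φ(x), 1, 1, …, 1), where Φ(x) = x_0 · ρ(x_1) · ρ²(x_2) ⋯ ρ^{k−1}(x_{k−1}) is the twisted product (the factors multiplied in increasing index order, ρ^i denoting the i-th iterate of ρ). -/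
/-- The relation `R x y ↔ ∃ g, ∀ i, y_i = g_i · x_i · (ρ(g_{i+1}))⁻¹` (indices mod `k`). -/
def tupleRel {π : Type*} [Group π] {k : ℕ} [NeZero k] (ρ : π →* π)
    (x y : Fin k → π) : Prop :=
  ∃ g : Fin k → π, ∀ i : Fin k, y i = g i * x i * (ρ (g (i + 1)))⁻¹

/-- The twisted product `Φ(x) = x_0 · ρ(x_1) · ρ²(x_2) ⋯ ρ^{k−1}(x_{k−1})`,
multiplied in increasing index order. -/
def twistedProd {π : Type*} [Group π] {k : ℕ} (ρ : π →* π) (x : Fin k → π) : π :=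
  (List.ofFn (fun i : Fin k => (⇑ρ)^[(i : ℕ)] (x i))).prod

set_option linter.unusedSectionVars false

section aux

variable {π : Type*} [Group π] (ρ : π →* π)

def auxQ : ℕ → (ℕ → π) → π
  | 0, _ => 1
  | n + 1, y => y 0 * ρ (auxQ n (fun j => y (j + 1)))

lemma ofFn_twist (n : ℕ) (y : ℕ → π) :
    (List.ofFn fun j : Fin n => (⇑ρ)^[(j : ℕ)] (y j)).prod = auxQ ρ n y := by
  induction n generalizing y with
  | zero => simp [auxQ]
  | succ n ih =>
    rw [List.ofFn_succ, List.prod_cons, auxQ]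
    simp only [Fin.val_zero, Function.iterate_zero, id_eq, Fin.val_succ]
    congr 1
    have : (List.ofFn fun j : Fin n => (⇑ρ)^[(j : ℕ) + 1] (y (j + 1)))
        = List.map ρ (List.ofFn fun j : Fin n => (⇑ρ)^[(j : ℕ)] (y (j + 1))) := by
      rw [List.map_ofFn]
      congr 1
      funext j
      simp [Function.comp, Function.iterate_succ_apply']
    rw [this, ← map_list_prod]
    exact congrArg ρ (ih fun j => y (j + 1))

variable {k : ℕ} [NeZero k] (x : Fin k → π)

def auxq (m : ℕ) : π :=
  if h : m < k then x ⟨m, h⟩ * ρ (auxq (m + 1)) else 1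
termination_by k - m

lemma auxq_of_lt {m : ℕ} (h : m < k) :
    auxq ρ x m = x ⟨m, h⟩ * ρ (auxq ρ x (m + 1)) := by
  rw [auxq]; simp [h]

lemma auxq_of_ge {m : ℕ} (h : ¬ m < k) : auxq ρ x m = 1 := by
  rw [auxq]; simp [h]

lemma auxq_eq_auxQ (m : ℕ) :
    auxq ρ x m = auxQ ρ (k - m) (fun j => if h : m + j < k then x ⟨m + j, h⟩ else 1) := by
  by_cases h : m < k
  · have hk : k - m = (k - (m + 1)) + 1 := by omega
    rw [auxq_of_lt ρ x h, hk, auxQ, auxq_eq_auxQ (m + 1)]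
    congr 1
    · simp [h]
    · congr 1
      · congr 1
        funext j
        have : m + 1 + j = m + (j + 1) := by omega
        rw [this]
  · rw [auxq_of_ge ρ x h]
    have : k - m = 0 := by omega
    rw [this, auxQ]
termination_by k - m

lemma auxq_zero : auxq ρ x 0 = twistedProd ρ x := by
  rw [auxq_eq_auxQ, ← ofFn_twist, twistedProd]
  have he : (fun j : Fin (k - 0) => (⇑ρ)^[(j : ℕ)]
      (if h : 0 + (j : ℕ) < k then x ⟨0 + (j : ℕ), h⟩ else 1))
      = fun i : Fin (k - 0) => (⇑ρ)^[(i : ℕ)] (x i) := by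
    funext j
    have hj' : 0 + (j : ℕ) < k := by omega
    simp only [dif_pos hj']
    have hx : (⟨0 + (j : ℕ), hj'⟩ : Fin k) = j := Fin.ext (Nat.zero_add (j : ℕ))
    rw [hx]
  rw [he]
  rfl

end aux

theorem tupleRel_equivalence_and_normal_form {π : Type*} [Group π] {k : ℕ} [NeZero k]
    (ρ : π →* π) :
    Equivalence (tupleRel ρ (k := k)) ∧
      ∀ x : Fin k → π,
        tupleRel ρ x (fun i => if i = 0 then twistedProd ρ x else 1) := by
  constructor
  · constructor
    · intro x
      exact ⟨fun _ => 1, fun i => by simp⟩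
    · rintro x y ⟨g, hg⟩
      refine ⟨fun i => (g i)⁻¹, fun i => ?_⟩
      rw [hg i]
      group
      simp [mul_assoc]
    · rintro x y z ⟨g, hg⟩ ⟨h, hh⟩
      refine ⟨fun i => h i * g i, fun i => ?_⟩
      rw [hh i, hg i]
      simp [mul_assoc]
  · intro x
    refine ⟨fun i => if i = 0 then 1 else (auxq ρ x i)⁻¹, fun i => ?_⟩
    rcases eq_or_ne i 0 with rfl | hi
    · simp only [if_pos rfl]
      by_cases hk : k = 1
      · subst hk
        have h01 : ((0 : Fin 1) + 1) = 0 := rfl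
        rw [h01]
        simp only [if_pos rfl]
        have := auxq_zero ρ x
        rw [auxq_of_lt ρ x (by omega : (0:ℕ) < 1), auxq_of_ge ρ x (by omega)] at this
        simp only [map_one, mul_one] at this
        simp [← this]
      · have hk2 : 2 ≤ k := by have := Nat.pos_of_ne_zero (NeZero.ne k); omega
        have h1 : ((0 : Fin k) + 1) = ⟨1, by omega⟩ := by
          ext
          simp [Fin.val_add, Nat.mod_eq_of_lt (by omega : 1 < k)]
        rw [h1]
        have hne : (⟨1, by omega⟩ : Fin k) ≠ 0 := by
          simp [Fin.ext_iff]
        rw [if_neg hne]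
        have := auxq_zero ρ x
        rw [auxq_of_lt ρ x (by omega : (0:ℕ) < k)] at this
        rw [← this]
        have h0 : (⟨0, by omega⟩ : Fin k) = 0 := Fin.ext rfl
        rw [h0]
        simp [mul_assoc]
    · simp only [if_neg hi]
      rcases i with ⟨iv, hiv⟩
      have hiv1 : 1 ≤ iv := by
        rcases Nat.eq_zero_or_pos iv with h | h
        · exact absurd (Fin.ext h) hi
        · omega
      by_cases hlast : iv = k - 1
      · have h1 : ((⟨iv, hiv⟩ : Fin k) + 1) = 0 := by
          ext
          have : (iv + 1) % k = 0 := by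
            have : iv + 1 = k := by omega
            simp [this]
          simpa [Fin.val_add, Nat.mod_eq_of_lt hiv] using this
        rw [h1, if_pos rfl]
        have hq : auxq ρ x iv = x ⟨iv, hiv⟩ * ρ (auxq ρ x (iv + 1)) := auxq_of_lt ρ x hiv
        rw [auxq_of_ge ρ x (by omega : ¬ iv + 1 < k)] at hq
        simp only [map_one, mul_one] at hq
        rw [hq]
        simp
      · have hiv2 : iv + 1 < k := by omega
        have h1 : ((⟨iv, hiv⟩ : Fin k) + 1) = ⟨iv + 1, hiv2⟩ := by
          ext
          simp [Fin.val_add, Nat.mod_eq_of_lt hiv2, Nat.mod_eq_of_lt hiv]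
        rw [h1]
        have hne : (⟨iv + 1, hiv2⟩ : Fin k) ≠ 0 := by
          simp [Fin.ext_iff]
        rw [if_neg hne]
        have hq : auxq ρ x iv = x ⟨iv, hiv⟩ * ρ (auxq ρ x (iv + 1)) := auxq_of_lt ρ x hiv
        simp only [Fin.val_mk]
        rw [map_inv, inv_inv, hq]
        group
end

section
/- Let π be a group, ρ : π → π a group homomorphism, and k ≥ 1 an integer. Define the relation R on Fin k → π by: R x y if and only if there exists g : Fin k → π with y_i = g_i · x_i · (ρ(g_{i+1}))⁻¹ for all i (indices mod k). For y, z ∈ π, the tuples (y, 1, …, 1) and (z, 1, …, 1) are R-related if and only if there exists g ∈ π with z = g · y · (ρ^k(g))⁻¹, where ρ^k denotes the k-th iterate of ρ (i.e. if and only if y and z are ρ^k-twisted conjugate). -/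
/-!
Away from the index `0` the relation between `(y, 1, …, 1)` and `(z, 1, …, 1)` reads
`g i = ρ (g (i + 1))`, so walking backwards from `g k = g 0` forces `g i = ρ^(k - i) (g 0)`
(the exponent `(k - i) mod k` is `(-i).val` in `Fin k`), and conversely these values satisfy
every equation except the one at `0`. In particular `ρ (g 1) = ρ^k (g 0)`, and the remaining
equation `z = g 0 · y · ρ (g 1)⁻¹` is twisted conjugacy.
-/

section BackwardChain

variable {α : Type*} {f : α → α} {n : ℕ}

theorem eq_iterate_val_neg_of_backward_chain {g : Fin (n + 1) → α}
    (hg : ∀ i ≠ 0, g i = f (g (i + 1))) (i : Fin (n + 1)) : g i = f^[(-i).val] (g 0) := by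
  suffices h : ∀ j : Fin (n + 1), g (-j) = f^[j.val] (g 0) by simpa using h (-i)
  intro j
  induction j using Fin.induction with
  | zero => simp
  | succ j ih =>
    have hstep : -j.succ + 1 = -j.castSucc := by rw [← Fin.coeSucc_eq_succ]; abel
    rw [hg _ (neg_ne_zero.mpr j.succ_ne_zero), hstep, ih, Fin.val_succ, Fin.val_castSucc,
      Function.iterate_succ_apply']

theorem apply_one_eq_iterate_of_backward_chain {g : Fin (n + 1) → α}
    (hg : ∀ i ≠ 0, g i = f (g (i + 1))) : f (g 1) = f^[n + 1] (g 0) := by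
  rw [eq_iterate_val_neg_of_backward_chain hg 1, Fin.coe_neg_one, Function.iterate_succ_apply']

variable (f)

theorem backward_chain_iterate_val_neg (a : α) :
    ∀ i ≠ (0 : Fin (n + 1)), f^[(-i).val] a = f (f^[(-(i + 1)).val] a) := by
  intro i hi
  have hval : (-(i + 1)).val + 1 = (-i).val := by
    rw [neg_add, ← sub_eq_add_neg, Fin.coe_sub_one, if_neg (neg_ne_zero.mpr hi)]
    have : (-i).val ≠ 0 := Fin.val_ne_iff.mpr (neg_ne_zero.mpr hi)
    omega
  rw [← Function.iterate_succ_apply' f, Nat.succ_eq_add_one, hval]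

end BackwardChain

theorem tupleRel_normalForm_iff {π : Type*} [Group π] {k : ℕ} [NeZero k] (ρ : π →* π)
    (y z : π) :
    tupleRel ρ (fun i : Fin k => if i = 0 then y else 1)
        (fun i : Fin k => if i = 0 then z else 1) ↔
      ∃ g : Fin k → π, z = g 0 * y * (ρ (g 1))⁻¹ ∧ ∀ i ≠ 0, g i = ρ (g (i + 1)) := by
  refine exists_congr fun g => ⟨fun h => ⟨by simpa using h 0, fun i hi => ?_⟩, ?_⟩
  · simpa [hi, eq_comm (a := (1 : π)), mul_inv_eq_one] using h i
  · rintro ⟨h0, h⟩ i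
    by_cases hi : i = 0
    · subst hi
      simpa using h0
    · simp [hi, h i hi]

/-- `(y,1,…,1)` and `(z,1,…,1)` are related iff `y` and `z` are `ρ^k`-twisted conjugate. -/
theorem tupleRel_on_normal_forms_iff_twisted_conjugate {π : Type*} [Group π] {k : ℕ}
    [NeZero k] (ρ : π →* π) (y z : π) :
    tupleRel ρ (fun i : Fin k => if i = 0 then y else 1)
        (fun i : Fin k => if i = 0 then z else 1) ↔
      ∃ g : π, z = g * y * ((⇑ρ)^[k] g)⁻¹ := by
  obtain ⟨n, rfl⟩ := Nat.exists_eq_succ_of_ne_zero (NeZero.ne k)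
  rw [tupleRel_normalForm_iff]
  constructor
  · rintro ⟨g, hz, hg⟩
    exact ⟨g 0, by rw [hz, apply_one_eq_iterate_of_backward_chain hg]⟩
  · rintro ⟨a, hz⟩
    have hg := backward_chain_iterate_val_neg (n := n) ρ a
    refine ⟨fun i => (⇑ρ)^[(-i).val] a, ?_, hg⟩
    rw [apply_one_eq_iterate_of_backward_chain hg]
    simpa using hz
end

section
/- Let π be a group, ρ : π → π a group homomorphism, and k ≥ 1 an integer. Define the relation R on Fin k → π by: R x y iff there exists g : Fin k → π with y_i = g_i · x_i · (ρ(g_{i+1}))⁻¹ for all i (indices mod k), and define ρ^k-twisted conjugacy on π by: y ∼ z iff z = g · y · (ρ^k(g))⁻¹ for some g ∈ π. Then for all tuples x, y : Fin k → π one has R x y if and only if Φ(x) and Φ(y) are ρ^k-twisted conjugate, where Φ(x) = x_0 · ρ(x_1) · ρ²(x_2) ⋯ ρ^{k−1}(x_{k−1}); moreover Φ is surjective onto π. Consequently Φ induces a bijection from the quotient of (Fin k → π) by R onto the quotient of π by ρ^k-twisted conjugacy. -/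
/-- `ρ^k`-twisted conjugacy: `y ∼ z` iff `z = g · y · (ρ^k(g))⁻¹` for some `g`. -/
def twistedConj {π : Type*} [Group π] (ρ : π →* π) (k : ℕ) (y z : π) : Prop :=
  ∃ g : π, z = g * y * ((⇑ρ)^[k] g)⁻¹


/-!
A gauge `g` acts on a tuple by `x_i ↦ g_i x_i ρ(g_{i+1})⁻¹`; along the partial twisted products
this telescopes, so it changes `Φ` by the `ρ^k`-twisted conjugation by `g_0`. Conversely, writing
`T_x(n) = x_n ρ(x_{n+1}) ⋯ ρ^{k-1-n}(x_{k-1})` for the tail products, so that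
`x_n = T_x(n) ρ(T_x(n+1))⁻¹`, a twisted conjugation `Φ(y) = c Φ(x) ρ^k(c)⁻¹` is realised by the
gauge `g_n = T_y(n) ρ^{k-n}(c) T_x(n)⁻¹`, which takes the value `c` at both `n = 0` and `n = k`.
Surjectivity is witnessed by `(a, 1, …, 1)`.
-/

noncomputable def Quot.equivOfSurjective {α β : Type*} {r : α → α → Prop} {s : β → β → Prop}
    (f : α → β) (hf : Function.Surjective f) (hs : ∀ b, s b b)
    (h : ∀ x y, r x y ↔ s (f x) (f y)) : Quot r ≃ Quot s where
  toFun := Quot.lift (fun x => Quot.mk s (f x)) fun x y hxy => Quot.sound ((h x y).1 hxy)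
  invFun := Quot.lift (fun b => Quot.mk r (Function.surjInv hf b)) fun a b hab =>
    Quot.sound <| (h _ _).2 <| by rwa [Function.surjInv_eq hf, Function.surjInv_eq hf]
  left_inv := Quot.ind fun x => Quot.sound <| (h _ _).2 <| by
    rw [Function.surjInv_eq hf]
    exact hs _
  right_inv := Quot.ind fun b => by
    simp only [Function.surjInv_eq hf]

section TwistedProd

variable {π : Type*} [Group π] (ρ : π →* π)

/-- `twistedProdFrom ρ f n m = f n · ρ(f (n+1)) ⋯ ρ^{m-1}(f (n+m-1))`. -/
def twistedProdFrom (f : ℕ → π) : ℕ → ℕ → π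
  | _, 0 => 1
  | n, m + 1 => f n * ρ (twistedProdFrom f (n + 1) m)

theorem twistedProd_shift_eq_twistedProdFrom (f : ℕ → π) (n m : ℕ) :
    twistedProd ρ (fun i : Fin m => f (n + i)) = twistedProdFrom ρ f n m := by
  induction m generalizing n with
  | zero => rfl
  | succ m ih =>
    rw [twistedProdFrom, ← ih, twistedProd, twistedProd, map_list_prod, List.map_ofFn,
      List.ofFn_succ, List.prod_cons]
    congr 2
    refine congrArg List.ofFn (funext fun i => ?_)
    simp only [Function.comp_apply, Fin.val_succ, Function.iterate_succ_apply', add_assoc,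
      add_comm 1]

theorem twistedProdFrom_gauge (f g : ℕ → π) (n m : ℕ) :
    twistedProdFrom ρ (fun j => g j * f j * (ρ (g (j + 1)))⁻¹) n m
      = g n * twistedProdFrom ρ f n m * ((⇑ρ)^[m] (g (n + m)))⁻¹ := by
  induction m generalizing n with
  | zero => simp [twistedProdFrom]
  | succ m ih =>
    simp only [twistedProdFrom, ih, map_mul, map_inv, Function.iterate_succ_apply',
      add_right_comm n 1 m, ← add_assoc]
    group

theorem exists_gauge_of_twistedConj {f f' : ℕ → π} {k : ℕ}
    (h : twistedConj ρ k (twistedProdFrom ρ f 0 k) (twistedProdFrom ρ f' 0 k)) :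
    ∃ G : ℕ → π, G k = G 0 ∧ ∀ n < k, f' n = G n * f n * (ρ (G (n + 1)))⁻¹ := by
  obtain ⟨c, hc⟩ := h
  refine ⟨fun n => twistedProdFrom ρ f' n (k - n) * (⇑ρ)^[k - n] c *
    (twistedProdFrom ρ f n (k - n))⁻¹, ?_, fun n hn => ?_⟩
  · simp only [Nat.sub_self, Nat.sub_zero, hc, twistedProdFrom, Function.iterate_zero, id_eq]
    group
  · obtain ⟨m, hm⟩ : ∃ m, k - n = m + 1 := ⟨k - n - 1, by omega⟩
    simp only [hm, show k - (n + 1) = m by omega, twistedProdFrom, map_mul, map_inv,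
      Function.iterate_succ_apply']
    group

end TwistedProd

section Tuples

open Fin.NatCast

variable {π : Type*} [Group π] {k : ℕ} [NeZero k] (ρ : π →* π)

theorem twistedProd_eq_twistedProdFrom (x : Fin k → π) :
    twistedProd ρ x = twistedProdFrom ρ (fun n : ℕ => x n) 0 k := by
  simp [← twistedProd_shift_eq_twistedProdFrom]

theorem twistedProd_surjective : Function.Surjective (twistedProd ρ : (Fin k → π) → π) := by
  obtain ⟨m, rfl⟩ : ∃ m, k = m + 1 := Nat.exists_eq_add_one.2 (Nat.pos_of_neZero k)
  refine fun a => ⟨Pi.mulSingle 0 a, ?_⟩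
  simp [twistedProd, List.ofFn_succ, Fin.succ_ne_zero]

theorem tupleRel_of_gauge {x y : Fin k → π} (G : ℕ → π) (hG : G k = G 0)
    (h : ∀ n < k, y n = G n * x n * (ρ (G (n + 1)))⁻¹) : tupleRel ρ x y := by
  refine ⟨fun i => G i, fun i => ?_⟩
  have hsucc : G ((i + 1 : Fin k) : ℕ) = G (i + 1) := by
    rw [← Fin.cast_val_eq_self i, ← Nat.cast_add_one, Fin.val_natCast, Fin.cast_val_eq_self]
    obtain hlt | heq : (i : ℕ) + 1 < k ∨ (i : ℕ) + 1 = k := by omega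
    · rw [Nat.mod_eq_of_lt hlt]
    · rw [heq, Nat.mod_self, hG]
  simpa [hsucc] using h i i.isLt

theorem twistedConj_of_tupleRel {x y : Fin k → π} (h : tupleRel ρ x y) :
    twistedConj ρ k (twistedProd ρ x) (twistedProd ρ y) := by
  obtain ⟨g, hg⟩ := h
  have hy : (fun n : ℕ => y n) = fun n : ℕ => g n * x n * (ρ (g ↑(n + 1)))⁻¹ :=
    funext fun n => by rw [hg, Nat.cast_succ]
  refine ⟨g 0, ?_⟩
  rw [twistedProd_eq_twistedProdFrom, twistedProd_eq_twistedProdFrom, hy,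
    twistedProdFrom_gauge ρ (fun n : ℕ => x n) (fun n : ℕ => g n)]
  simp

theorem tupleRel_iff_twistedConj (x y : Fin k → π) :
    tupleRel ρ x y ↔ twistedConj ρ k (twistedProd ρ x) (twistedProd ρ y) := by
  refine ⟨twistedConj_of_tupleRel ρ, fun h => ?_⟩
  rw [twistedProd_eq_twistedProdFrom, twistedProd_eq_twistedProdFrom] at h
  obtain ⟨G, hG, hGy⟩ := exists_gauge_of_twistedConj ρ h
  exact tupleRel_of_gauge ρ G hG hGy

end Tuples

theorem tupleRel_iff_twistedConj_and_quotient_bijection {π : Type*} [Group π] {k : ℕ}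
    [NeZero k] (ρ : π →* π) :
    (∀ x y : Fin k → π, tupleRel ρ x y ↔ twistedConj ρ k (twistedProd ρ x) (twistedProd ρ y)) ∧
    Function.Surjective (twistedProd ρ : (Fin k → π) → π) ∧
    ∃ e : Quot (tupleRel ρ (k := k)) ≃ Quot (twistedConj ρ k),
      ∀ x : Fin k → π,
        e (Quot.mk (tupleRel ρ) x) = Quot.mk (twistedConj ρ k) (twistedProd ρ x) := by
  refine ⟨tupleRel_iff_twistedConj ρ, twistedProd_surjective ρ, ?_⟩
  have hrefl : ∀ a, twistedConj ρ k a a := fun a => ⟨1, by simp⟩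
  exact ⟨Quot.equivOfSurjective _ (twistedProd_surjective ρ) hrefl (tupleRel_iff_twistedConj ρ),
    fun _ => rfl⟩
end

section
/- Let π be a group, ρ : π → π a group homomorphism, and k ≥ 1 an integer. For a tuple x : Fin k → π let Φ(x) = x_0 · ρ(x_1) · ρ²(x_2) ⋯ ρ^{k−1}(x_{k−1}) be the twisted product, and let σ be the cyclic shift σ(x)_i = x_{i−1} (indices mod k), so that Φ(σ(x)) = x_{k−1} · ρ(x_0) · ρ²(x_1) ⋯ ρ^{k−1}(x_{k−2}). Then Φ(σ(x)) is ρ^k-twisted conjugate to ρ(Φ(x)); explicitly, Φ(σ(x)) = g · ρ(Φ(x)) · (ρ^k(g))⁻¹ with g = x_{k−1}. -/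
/-- The cyclic shift `σ(x)_i = x_{i−1}` (indices mod `k`). -/
def cyclicShift {π : Type*} {k : ℕ} [NeZero k] (x : Fin k → π) : Fin k → π :=
  fun i => x (i - 1)

/-- The last index `k − 1` of `Fin k`. -/
def lastIdx (k : ℕ) [NeZero k] : Fin k :=
  ⟨k - 1, Nat.sub_lt (Nat.pos_of_ne_zero (NeZero.ne k)) Nat.one_pos⟩

/-- `Φ(σ(x)) = x_{k−1} · ρ(Φ(x)) · (ρ^k(x_{k−1}))⁻¹`, so `Φ(σ(x))` is
`ρ^k`-twisted conjugate to `ρ(Φ(x))` via `g = x_{k−1}`. -/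
theorem twistedProd_cyclicShift {π : Type*} [Group π] {k : ℕ} [NeZero k]
    (ρ : π →* π) (x : Fin k → π) :
    twistedProd ρ (cyclicShift x) =
      x (lastIdx k) * ρ (twistedProd ρ x) * ((⇑ρ)^[k] (x (lastIdx k)))⁻¹ := by
  obtain ⟨n, rfl⟩ := Nat.exists_eq_succ_of_ne_zero (NeZero.ne k)
  have hlast : lastIdx (n + 1) = Fin.last n := rfl
  simp only [twistedProd, cyclicShift, hlast]
  rw [List.ofFn_succ, List.ofFn_succ' (fun i : Fin (n+1) => (⇑ρ)^[(i : ℕ)] (x i))]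
  simp only [List.concat_eq_append, List.prod_append, List.prod_cons, List.prod_nil, mul_one,
    map_mul, map_list_prod, List.map_ofFn]
  have h0 : (0 : Fin (n+1)) - 1 = Fin.last n := by
    simp [Fin.ext_iff, Fin.sub_def, Fin.last]
  have h1 : ∀ i : Fin n, i.succ - 1 = i.castSucc := by
    intro i
    rw [← Fin.coeSucc_eq_succ]
    exact add_sub_cancel_right _ _
  have h2 : (fun i : Fin n => (⇑ρ)^[(i.succ : ℕ)] (x (i.succ - 1))) =
      (⇑ρ ∘ fun i : Fin n => (⇑ρ)^[((i.castSucc : Fin (n+1)) : ℕ)] (x i.castSucc)) := by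
    funext i
    simp [h1 i, Function.iterate_succ_apply', Fin.val_succ, Fin.coe_castSucc]
  simp only [Fin.val_zero, Function.iterate_zero, id_eq, h0, h2]
  rw [Function.iterate_succ_apply' (⇑ρ) n, Fin.val_last]
  group
end

section
/- Let π be a group, ρ : π → π a group homomorphism, and k ≥ 1 an integer. Let ≈ be the equivalence relation on Fin k → π generated by the two elementary relations: (i) x ≈ y whenever there exists g : Fin k → π with y_i = g_i · x_i · (ρ(g_{i+1}))⁻¹ for all i (indices mod k), and (ii) x ≈ σ(x), where σ(x)_i = x_{i−1} is the cyclic shift. Let ∼ be the equivalence relation on π generated by: y ∼ g · y · (ρ^k(g))⁻¹ for all g ∈ π, and y ∼ ρ(y). Then the twisted product Φ(x) = x_0 · ρ(x_1) · ρ²(x_2) ⋯ ρ^{k−1}(x_{k−1}) induces a bijection from the quotient of (Fin k → π) by ≈ onto the quotient π_{ρ,k} of π by ∼. -/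
/-- The equivalence relation `≈` on tuples generated by the elementary relations
(i) twisting and (ii) cyclic shift. -/
def tupleEqv {π : Type*} [Group π] {k : ℕ} [NeZero k] (ρ : π →* π)
    (x y : Fin k → π) : Prop :=
  Relation.EqvGen (fun x y => tupleRel ρ x y ∨ y = cyclicShift x) x y

/-- The equivalence relation `∼` on `π` generated by `y ∼ g · y · (ρ^k(g))⁻¹`
and `y ∼ ρ(y)`; the quotient is `π_{ρ,k}`. -/
def groupEqv {π : Type*} [Group π] (ρ : π →* π) (k : ℕ) (y z : π) : Prop :=
  Relation.EqvGen (fun y z => (∃ g : π, z = g * y * ((⇑ρ)^[k] g)⁻¹) ∨ z = ρ y) y z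

section Aux

variable {π : Type*} [Group π] (ρ : π →* π)

/-- `natTw ρ w n = w 0 * ρ (w 1) * ⋯ * ρ^[n-1] (w (n-1))`. -/
def natTw (w : ℕ → π) : ℕ → π
  | 0 => 1
  | n + 1 => natTw w n * (⇑ρ)^[n] (w n)

lemma natTw_cons (w : ℕ → π) :
    ∀ n, natTw ρ w (n + 1) = w 0 * ρ (natTw ρ (fun i => w (i + 1)) n)
  | 0 => by simp [natTw]
  | n + 1 => by
    rw [natTw, natTw_cons w n, natTw, map_mul, mul_assoc,
      ← Function.iterate_succ_apply' (⇑ρ) n (w (n + 1))]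

lemma natTw_congr {w w' : ℕ → π} : ∀ n, (∀ i < n, w i = w' i) → natTw ρ w n = natTw ρ w' n
  | 0, _ => rfl
  | n + 1, h => by
    rw [natTw, natTw, natTw_congr n (fun i hi => h i (by omega)), h n (by omega)]

lemma natTw_ones {w : ℕ → π} : ∀ n, (∀ i < n, w i = 1) → natTw ρ w n = 1
  | 0, _ => rfl
  | n + 1, h => by
    rw [natTw, natTw_ones n (fun i hi => h i (by omega)), h n (by omega), iterate_map_one,
      one_mul]

lemma natTw_telescope {w w' g : ℕ → π}
    (h : ∀ i, w' i = g i * w i * (ρ (g (i + 1)))⁻¹) :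
    ∀ n, natTw ρ w' n = g 0 * natTw ρ w n * ((⇑ρ)^[n] (g n))⁻¹
  | 0 => by simp [natTw]
  | n + 1 => by
    rw [natTw, natTw, natTw_telescope h n, h n, iterate_map_mul, iterate_map_mul,
      iterate_map_inv, ← Function.iterate_succ_apply (⇑ρ) n (g (n + 1))]
    group

/-- Tail twisted product: `tl ρ w m i = w i * ρ (w (i+1)) * ⋯ * ρ^[m-1] (w (i+m-1))`. -/
def tl (w : ℕ → π) : ℕ → ℕ → π
  | 0, _ => 1
  | m + 1, i => w i * ρ (tl w m (i + 1))

lemma tl_shift (w : ℕ → π) : ∀ m i, tl ρ (fun j => w (j + 1)) m i = tl ρ w m (i + 1)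
  | 0, _ => rfl
  | m + 1, i => by rw [tl, tl, tl_shift w m (i + 1)]

lemma natTw_eq_tl : ∀ (n : ℕ) (w : ℕ → π), natTw ρ w n = tl ρ w n 0
  | 0, _ => rfl
  | n + 1, w => by
    rw [natTw_cons, natTw_eq_tl n (fun i => w (i + 1)), tl_shift, tl]

lemma listOfFn_eq_natTw (w : ℕ → π) :
    ∀ n, (List.ofFn (fun i : Fin n => (⇑ρ)^[(i : ℕ)] (w i))).prod = natTw ρ w n
  | 0 => rfl
  | n + 1 => by
    rw [List.ofFn_succ', List.prod_concat, natTw]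
    simp only [Fin.coe_castSucc, Fin.val_last]
    rw [listOfFn_eq_natTw w n]

end Aux

section Fin

variable {π : Type*} [Group π] {k : ℕ} [NeZero k] (ρ : π →* π)

/-- Extension of a `k`-tuple to a `k`-periodic `ℕ`-indexed family. -/
def extFn (x : Fin k → π) : ℕ → π := fun n => x ⟨n % k, Nat.mod_lt n (NeZero.pos k)⟩

lemma extFn_lt (x : Fin k → π) {n : ℕ} (h : n < k) : extFn x n = x ⟨n, h⟩ := by
  unfold extFn
  congr 1
  exact Fin.ext (Nat.mod_eq_of_lt h)

lemma extFn_val (x : Fin k → π) (i : Fin k) : extFn x (i : ℕ) = x i :=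
  (extFn_lt x i.isLt).trans (congrArg x (Fin.ext rfl))

lemma fin_val_add_one (i : Fin k) : ((i + 1 : Fin k) : ℕ) = ((i : ℕ) + 1) % k := by
  rw [Fin.val_add, Fin.val_one']
  conv_rhs => rw [Nat.add_mod, Nat.mod_eq_of_lt i.isLt]

lemma fin_mk_add_one {i : ℕ} (h : i + 1 < k) (h' : i < k) :
    (⟨i, h'⟩ : Fin k) + 1 = ⟨i + 1, h⟩ := by
  apply Fin.ext
  rw [fin_val_add_one]
  exact Nat.mod_eq_of_lt h

lemma fin_last_add_one : (⟨k - 1, by have := NeZero.pos k; omega⟩ : Fin k) + 1 = 0 := by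
  apply Fin.ext
  rw [fin_val_add_one]
  have := NeZero.pos k
  simp only [Fin.val_zero]
  have : k - 1 + 1 = k := by omega
  rw [this, Nat.mod_self]

lemma extFn_add_one (x : Fin k → π) (n : ℕ) :
    extFn x (n + 1) = x (⟨n % k, Nat.mod_lt n (NeZero.pos k)⟩ + 1) := by
  unfold extFn
  congr 1
  apply Fin.ext
  rw [fin_val_add_one]
  exact (Nat.mod_add_mod n k 1).symm

lemma twistedProd_eq_natTw (x : Fin k → π) :
    twistedProd ρ x = natTw ρ (extFn x) k := by
  rw [twistedProd, ← listOfFn_eq_natTw]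
  exact congrArg List.prod (congrArg List.ofFn (funext fun i => by rw [extFn_val]))

end Fin

section Main

variable {π : Type*} [Group π] {k : ℕ} [NeZero k] (ρ : π →* π)

/-- The inclusion `y ↦ (y, 1, …, 1)`. -/
def iotaT (y : π) : Fin k → π := fun i => if i = 0 then y else 1

lemma k_succ : ∃ m, k = m + 1 := ⟨k - 1, by have := NeZero.pos k; omega⟩

lemma extFn_zero (x : Fin k → π) : extFn x 0 = x 0 := by
  rw [extFn_lt x (NeZero.pos k)]
  exact congrArg x (Fin.ext (by simp))

lemma fin_mk_ne_zero {a : ℕ} (h : a < k) (ha : a ≠ 0) : (⟨a, h⟩ : Fin k) ≠ 0 := by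
  intro hc
  apply ha
  simpa using congrArg Fin.val hc

lemma tl_eq_pos (w : ℕ → π) {m : ℕ} (hm : 0 < m) (i : ℕ) :
    tl ρ w m i = w i * ρ (tl ρ w (m - 1) (i + 1)) := by
  obtain ⟨n, rfl⟩ : ∃ n, m = n + 1 := ⟨m - 1, by omega⟩
  simp [tl]

lemma phi_tupleRel {x y : Fin k → π} (h : tupleRel ρ x y) :
    ∃ g : π, twistedProd ρ y = g * twistedProd ρ x * ((⇑ρ)^[k] g)⁻¹ := by
  obtain ⟨g, hg⟩ := h
  refine ⟨g 0, ?_⟩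
  have key : ∀ i : ℕ, extFn y i = extFn g i * extFn x i * (ρ (extFn g (i + 1)))⁻¹ := by
    intro i
    rw [extFn_add_one]
    exact hg _
  have h0 : extFn g 0 = g 0 := extFn_zero g
  have hk : extFn g k = g 0 := by
    unfold extFn; congr 1; apply Fin.ext; simp [Nat.mod_self]
  rw [twistedProd_eq_natTw, twistedProd_eq_natTw, natTw_telescope ρ key k, h0, hk]

lemma phi_shift (x : Fin k → π) :
    ∃ a : π, twistedProd ρ (cyclicShift x) = a * ρ (twistedProd ρ x) * ((⇑ρ)^[k] a)⁻¹ := by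
  obtain ⟨m, hm⟩ := k_succ (k := k)
  subst hm
  refine ⟨extFn x m, ?_⟩
  rw [twistedProd_eq_natTw, twistedProd_eq_natTw, natTw_cons, natTw]
  have hm1 : (⟨m % (m + 1), Nat.mod_lt m (Nat.succ_pos m)⟩ : Fin (m + 1)) + 1 = 0 := by
    apply Fin.ext
    rw [fin_val_add_one]
    have h1 : (m % (m + 1) + 1) % (m + 1) = 0 := by
      rw [Nat.mod_eq_of_lt (Nat.lt_succ_self m)]
      exact Nat.mod_self (m + 1)
    simpa using h1
  have h0 : extFn (cyclicShift x) 0 = extFn x m := by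
    unfold extFn cyclicShift
    congr 1
    have e0 : (⟨0 % (m + 1), Nat.mod_lt 0 (NeZero.pos (m + 1))⟩ : Fin (m + 1)) = 0 :=
      Fin.ext (by simp)
    rw [e0]
    exact ((eq_sub_of_add_eq hm1).symm).symm.symm
  have h2 : natTw ρ (fun i => extFn (cyclicShift x) (i + 1)) m = natTw ρ (extFn x) m := by
    apply natTw_congr
    intro i hi
    unfold extFn cyclicShift
    congr 1
    refine (eq_sub_of_add_eq ?_).symm
    apply Fin.ext
    rw [fin_val_add_one]
    exact Nat.mod_add_mod i (m + 1) 1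
  rw [h0, h2, map_mul, ← Function.iterate_succ_apply' (⇑ρ) m (extFn x m)]
  group

lemma twistedProd_iotaT (y : π) : twistedProd ρ (iotaT (k := k) y) = y := by
  obtain ⟨m, hm⟩ := k_succ (k := k)
  subst hm
  rw [twistedProd_eq_natTw, natTw_cons]
  have h1 : extFn (iotaT (k := m + 1) y) 0 = y := by
    rw [extFn_zero]
    simp [iotaT]
  have h2 : natTw ρ (fun i => extFn (iotaT (k := m + 1) y) (i + 1)) m = 1 := by
    apply natTw_ones
    intro i hi
    unfold extFn iotaT
    rw [if_neg]
    apply fin_mk_ne_zero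
    rw [Nat.mod_eq_of_lt (by omega : i + 1 < m + 1)]
    omega
  rw [h1, h2, map_one, mul_one]

lemma iotaT_twistedProd_rel (x : Fin k → π) :
    tupleRel ρ (iotaT (twistedProd ρ x)) x := by
  have hpos := NeZero.pos k
  refine ⟨fun i => if i = 0 then 1 else tl ρ (extFn x) (k - (i : ℕ)) (i : ℕ), ?_⟩
  intro i
  by_cases hi0 : i = 0
  · subst hi0
    by_cases hk1 : k = 1
    · have h01 : (0 + 1 : Fin k) = 0 := by
        apply Fin.ext
        rw [fin_val_add_one]
        simp [hk1]
      simp only [iotaT, h01, eq_self_iff_true, if_true, one_mul, map_one, inv_one, mul_one]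
      rw [twistedProd_eq_natTw, natTw_eq_tl, tl_eq_pos ρ _ hpos 0, extFn_zero]
      simp [hk1, tl]
    · have hk2 : 2 ≤ k := by omega
      have h01 : (0 + 1 : Fin k) = ⟨1, by omega⟩ := by
        apply Fin.ext
        rw [fin_val_add_one]
        simp [Nat.mod_eq_of_lt hk2]
      simp only [iotaT, h01, if_neg (fin_mk_ne_zero (by omega : 1 < k) one_ne_zero),
        eq_self_iff_true, if_true, one_mul]
      rw [twistedProd_eq_natTw, natTw_eq_tl, tl_eq_pos ρ _ hpos 0, extFn_zero]
      rw [Nat.zero_add]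
      group
  · have hival : (i : ℕ) ≠ 0 := fun hc => hi0 (Fin.ext (by simp [hc]))
    simp only [iotaT, if_neg hi0, mul_one]
    by_cases hil : (i : ℕ) = k - 1
    · have hlast : i + 1 = 0 := by
        apply Fin.ext
        rw [fin_val_add_one, hil]
        simpa [show k - 1 + 1 = k by omega] using Nat.mod_self k
      rw [hlast, if_pos rfl, map_one, inv_one, mul_one, hil,
        show k - (k - 1) = 1 by omega, tl_eq_pos ρ _ one_pos]
      simp only [Nat.sub_self, tl, map_one, mul_one]
      rw [extFn_lt x (by omega : k - 1 < k)]
      exact congrArg x (Fin.ext (by simp [hil]))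
    · have hi : (i : ℕ) < k - 1 := by have h := i.isLt; omega
      have hadd : ((i + 1 : Fin k) : ℕ) = (i : ℕ) + 1 := by
        rw [fin_val_add_one]
        exact Nat.mod_eq_of_lt (by omega)
      have hne : i + 1 ≠ 0 := fun hc => by
        have := congrArg Fin.val hc
        rw [hadd] at this
        simp at this
      rw [if_neg hne, hadd, tl_eq_pos ρ _ (by omega : 0 < k - (i : ℕ)),
        show k - (i : ℕ) - 1 = k - ((i : ℕ) + 1) by omega, extFn_val]
      group

lemma iotaT_conj_rel (y g : π) :
    tupleRel ρ (iotaT (k := k) y) (iotaT (k := k) (g * y * ((⇑ρ)^[k] g)⁻¹)) := by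
  have hpos := NeZero.pos k
  refine ⟨fun i => if i = 0 then g else (⇑ρ)^[k - (i : ℕ)] g, ?_⟩
  intro i
  by_cases hi0 : i = 0
  · subst hi0
    by_cases hk1 : k = 1
    · have h01 : (0 + 1 : Fin k) = 0 := by
        apply Fin.ext
        rw [fin_val_add_one]
        simp [hk1]
      simp only [iotaT, h01, eq_self_iff_true, if_true, hk1, Function.iterate_one]
    · have hk2 : 2 ≤ k := by omega
      have h01 : (0 + 1 : Fin k) = ⟨1, by omega⟩ := by
        apply Fin.ext
        rw [fin_val_add_one]
        simp [Nat.mod_eq_of_lt hk2]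
      simp only [iotaT, h01, if_neg (fin_mk_ne_zero (by omega : 1 < k) one_ne_zero),
        eq_self_iff_true, if_true]
      rw [← Function.iterate_succ_apply' (⇑ρ) (k - 1) g, show (k - 1).succ = k by omega]
  · have hival : (i : ℕ) ≠ 0 := fun hc => hi0 (Fin.ext (by simp [hc]))
    simp only [iotaT, if_neg hi0, mul_one]
    by_cases hil : (i : ℕ) = k - 1
    · have hlast : i + 1 = 0 := by
        apply Fin.ext
        rw [fin_val_add_one, hil]
        simpa [show k - 1 + 1 = k by omega] using Nat.mod_self k
      rw [hlast, hil, show k - (k - 1) = 1 by omega]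
      simp
    · have hi : (i : ℕ) < k - 1 := by have h := i.isLt; omega
      have hadd : ((i + 1 : Fin k) : ℕ) = (i : ℕ) + 1 := by
        rw [fin_val_add_one]
        exact Nat.mod_eq_of_lt (by omega)
      have hne : i + 1 ≠ 0 := fun hc => by
        have := congrArg Fin.val hc
        rw [hadd] at this
        simp at this
      rw [if_neg hne, hadd,
        ← Function.iterate_succ_apply' (⇑ρ) (k - ((i : ℕ) + 1)) g,
        show (k - ((i : ℕ) + 1)).succ = k - (i : ℕ) by omega]
      simp

lemma iotaT_rho_eqv (y : π) :
    tupleEqv ρ (iotaT (k := k) y) (iotaT (k := k) (ρ y)) := by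
  set t : Fin k → π := fun i => ρ (iotaT (k := k) y (i + 1)) with ht
  have step1 : tupleRel ρ (iotaT (k := k) y) t := by
    refine ⟨fun i => (iotaT (k := k) y i)⁻¹, ?_⟩
    intro i
    rw [ht]
    simp [map_inv]
  have step2 : iotaT (k := k) (ρ y) = cyclicShift t := by
    funext i
    rw [ht]
    simp only [cyclicShift, sub_add_cancel]
    unfold iotaT
    by_cases hi : i = 0
    · rw [if_pos hi, if_pos hi]
    · rw [if_neg hi, if_neg hi, map_one]
  exact Relation.EqvGen.trans _ _ _
    (Relation.EqvGen.rel _ _ (Or.inl step1))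
    (Relation.EqvGen.rel _ _ (Or.inr step2))

lemma phi_sound {x y : Fin k → π} (h : tupleEqv ρ x y) :
    groupEqv ρ k (twistedProd ρ x) (twistedProd ρ y) := by
  induction h with
  | rel a b hab =>
    rcases hab with hab | hab
    · exact Relation.EqvGen.rel _ _ (Or.inl (phi_tupleRel ρ hab))
    · subst hab
      exact Relation.EqvGen.trans _ _ _
        (Relation.EqvGen.rel _ _ (Or.inr rfl))
        (Relation.EqvGen.rel _ _ (Or.inl (phi_shift ρ a)))
  | refl a => exact Relation.EqvGen.refl _
  | symm a b _ ih => exact Relation.EqvGen.symm _ _ ih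
  | trans a b c _ _ ih1 ih2 => exact Relation.EqvGen.trans _ _ _ ih1 ih2

lemma iotaT_sound {y z : π} (h : groupEqv ρ k y z) :
    tupleEqv ρ (iotaT (k := k) y) (iotaT (k := k) z) := by
  induction h with
  | rel a b hab =>
    rcases hab with ⟨g, rfl⟩ | hab
    · exact Relation.EqvGen.rel _ _ (Or.inl (iotaT_conj_rel ρ a g))
    · subst hab
      exact iotaT_rho_eqv ρ a
  | refl a => exact Relation.EqvGen.refl _
  | symm a b _ ih => exact Relation.EqvGen.symm _ _ ih
  | trans a b c _ _ ih1 ih2 => exact Relation.EqvGen.trans _ _ _ ih1 ih2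

end Main

/-- The twisted product induces a bijection from the quotient of tuples by `≈`
onto `π_{ρ,k}`. -/
theorem twistedProd_induces_bijection {π : Type*} [Group π] {k : ℕ} [NeZero k]
    (ρ : π →* π) :
    ∃ e : Quot (tupleEqv ρ (k := k)) ≃ Quot (groupEqv ρ k),
      ∀ x : Fin k → π,
        e (Quot.mk (tupleEqv ρ) x) = Quot.mk (groupEqv ρ k) (twistedProd ρ x) := by
  refine ⟨⟨Quot.lift (fun x => Quot.mk (groupEqv ρ k) (twistedProd ρ x))
      (fun a b h => Quot.sound (phi_sound ρ h)),
    Quot.lift (fun y => Quot.mk (tupleEqv ρ (k := k)) (iotaT (k := k) y))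
      (fun a b h => Quot.sound (iotaT_sound ρ h)), ?_, ?_⟩, fun x => rfl⟩
  · intro q
    induction q using Quot.ind with
    | _ x =>
    show Quot.mk (tupleEqv ρ (k := k)) (iotaT (k := k) (twistedProd ρ x))
        = Quot.mk (tupleEqv ρ (k := k)) x
    exact Quot.sound
      ((Relation.EqvGen.rel _ _ (Or.inl (iotaT_twistedProd_rel ρ x))) :
        tupleEqv ρ (iotaT (twistedProd ρ x)) x)
  · intro q
    induction q using Quot.ind with
    | _ y =>
    show Quot.mk (groupEqv ρ k) (twistedProd ρ (iotaT (k := k) y)) = Quot.mk (groupEqv ρ k) y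
    rw [twistedProd_iotaT]
end

section
/- Let M be a path-connected topological space with a basepoint ∗, let f : M → M be continuous, and let k ≥ 1. Let hoP_k(f) be the subspace of the k-fold product of the path space C([0,1], M) (compact-open topology) consisting of tuples λ = (λ_0, …, λ_{k−1}) with f(λ_{i+1}(0)) = λ_i(1) for all i (indices mod k). Then every point of hoP_k(f) lies in the same path component of hoP_k(f) as some tuple λ′ satisfying λ′_i(0) = ∗ for all i (and hence λ′_i(1) = f(∗) for all i). -/
/-!
Choose paths `αᵢ` from `λᵢ(0)` to `∗`. For a path `γ` and paths `p`, `q` starting at its two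
endpoints, lay out `p` reversed, `γ` and `q` along `ℝ`; reading off the window `[-t, 1 + t]`
gives a path in `C(I, X)` starting at `γ` whose endpoints at time `t` are `p t` and `q t`.
Apply this to `λᵢ` with `p = αᵢ` and `q = f ∘ αᵢ₊₁`: at every time both sides of the constraint
`f (λᵢ₊₁(0)) = λᵢ(1)` equal `f (αᵢ₊₁(t))`, and at time `1` all paths start at `∗`.
-/

open unitInterval Set

namespace ContinuousMap

variable {X : Type*} [TopologicalSpace X]

noncomputable def concatLine (p γ q : C(I, X)) (x : ℝ) : X :=
  if x ≤ 0 then Set.IccExtend zero_le_one p (-x)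
  else if x ≤ 1 then Set.IccExtend zero_le_one γ x
  else Set.IccExtend zero_le_one q (x - 1)

variable {p γ q : C(I, X)}

theorem continuous_concatLine (hp : p 0 = γ 0) (hq : q 0 = γ 1) :
    Continuous (concatLine p γ q) := by
  refine Continuous.if_le (by fun_prop) ?_ continuous_id continuous_const ?_
  · refine Continuous.if_le (by fun_prop) (by fun_prop) continuous_id continuous_const ?_
    rintro x rfl
    simp [hq]
  · rintro x rfl
    simp [hp]

theorem concatLine_neg (t : I) : concatLine p γ q (-t) = p t := by
  rw [concatLine, if_pos (neg_nonpos.2 t.2.1), neg_neg, IccExtend_val]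

theorem concatLine_coe (hp : p 0 = γ 0) (s : I) : concatLine p γ q s = γ s := by
  rcases eq_or_ne s 0 with rfl | hs
  · simp [concatLine, hp]
  · have hs : (0 : ℝ) < s := unitInterval.pos_iff_ne_zero.2 hs
    rw [concatLine, if_neg hs.not_ge, if_pos s.2.2, IccExtend_val]

theorem concatLine_one_add (hq : q 0 = γ 1) (t : I) : concatLine p γ q (1 + t) = q t := by
  rcases eq_or_ne t 0 with rfl | ht
  · simp [concatLine, hq]
  · have ht : (0 : ℝ) < t := unitInterval.pos_iff_ne_zero.2 ht
    rw [concatLine, if_neg (by linarith), if_neg (by linarith), add_sub_cancel_left,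
      IccExtend_val]

theorem exists_path_moving_endpoints (hp : p 0 = γ 0) (hq : q 0 = γ 1) :
    ∃ (γ' : C(I, X)) (Γ : Path γ γ'), ∀ t, Γ t 0 = p t ∧ Γ t 1 = q t := by
  let H : C(I × I, X) :=
    ⟨fun ts => concatLine p γ q (-ts.1 + ts.2 * (1 + 2 * ts.1)),
      (continuous_concatLine hp hq).comp (by fun_prop)⟩
  refine ⟨H.curry 1, ⟨H.curry, ?_, rfl⟩, fun t => ⟨?_, ?_⟩⟩
  · ext s
    simp [H, concatLine_coe hp]
  · simp [H, concatLine_neg]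
  · change concatLine p γ q (-t + 1 * (1 + 2 * t)) = q t
    rw [← concatLine_one_add (p := p) hq t]
    ring_nf

end ContinuousMap

/-- The homotopy `k`-periodic point space of `f : M → M`: the subspace of
`(C(I, M))^k` of tuples `λ` with `f (λ_{i+1}(0)) = λ_i(1)` (indices mod `k`). -/
def hoP {M : Type*} [TopologicalSpace M] (f : M → M) (k : ℕ) [NeZero k] :
    Set (Fin k → C(I, M)) :=
  {lam | ∀ i : Fin k, f ((lam (i + 1)) 0) = (lam i) 1}

/-- In a path-connected space, every point of `hoP_k(f)` is joined, within
`hoP_k(f)`, to a tuple of paths all starting at the basepoint `∗` (and hence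
all ending at `f(∗)`). -/
theorem hoP_component_has_based_representative {M : Type*} [TopologicalSpace M]
    [PathConnectedSpace M] (star : M) (f : M → M) (hf : Continuous f)
    (k : ℕ) [NeZero k] (x : hoP f k) :
    ∃ y : hoP f k,
      (∀ i : Fin k, (y.1 i) 0 = star) ∧
      (∀ i : Fin k, (y.1 i) 1 = f star) ∧
      Joined x y := by
  obtain ⟨lam, hlam⟩ := x
  have α (i : Fin k) : Path (lam i 0) star := (PathConnectedSpace.joined _ _).somePath
  choose lam' Γ hΓ using fun i =>
    (lam i).exists_path_moving_endpoints (p := α i) (q := (⟨f, hf⟩ : C(M, M)).comp (α (i + 1)))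
      (α i).source (by simp [hlam i])
  have hΓ_mem (t : I) : (fun i => Γ i t) ∈ hoP f k := fun i => by
    simp [(hΓ i t).2, (hΓ (i + 1) t).1]
  have hlam' : lam' ∈ hoP f k := by simpa using hΓ_mem 1
  refine ⟨⟨lam', hlam'⟩, fun i => ?_, fun i => ?_, ?_⟩
  · simpa using (hΓ i 1).1
  · simpa using (hΓ i 1).2
  · exact JoinedIn.joined_subtype ⟨Path.pi Γ, hΓ_mem⟩
end

section
/- Let M be a topological space, f : M → M continuous, and k ≥ 1. Let hoP_k(f) be the subspace of (C([0,1], M))^k consisting of tuples λ = (λ_0, …, λ_{k−1}) with f(λ_{i+1}(0)) = λ_i(1) for all i (indices mod k). Two points λ and γ of hoP_k(f) lie in the same path component of hoP_k(f) if and only if there exist paths α_i in M from λ_i(0) to γ_i(0), for i = 0, …, k−1, such that for every i the concatenation λ_i · (f ∘ α_{i+1}) is path-homotopic rel endpoints to the concatenation α_i · γ_i (both are paths from λ_i(0) to γ_i(1); indices mod k). -/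
open unitInterval

/-- A continuous map `I → M`, regarded as a path from its value at `0` to its
value at `1`. -/
def toPath {M : Type*} [TopologicalSpace M] (g : C(I, M)) : Path (g 0) (g 1) :=
  ⟨g, rfl, rfl⟩

/-!
A path in `hoP_k(f)` from `λ` to `γ` is the same thing as a family of free homotopies
`F_i : λ_i ≃ γ_i` whose edge tracks are linked by `F_i(s, 1) = f (F_{i+1}(s, 0))`.
Given such a family, `α_i := F_i(·, 0)` works: the square `F_i` shows
`λ_i · (f ∘ α_{i+1}) ≃ α_i · γ_i`. Conversely, the relation says
`α_i⁻¹ · λ_i · (f ∘ α_{i+1}) ≃ γ_i` rel endpoints. Sliding the endpoints of each `λ_i` along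
`α_i` and `f ∘ α_{i+1}` is a path in `hoP_k(f)` from `λ` to that tuple, and a homotopy rel
endpoints from it to `γ` keeps every constraint, hence is a path in `hoP_k(f)` as well.
-/

namespace Path

variable {X : Type*} [TopologicalSpace X] {a b a' b' : X}

theorem Homotopic.symm_trans_trans_of_trans {p : Path a b} {q : Path a' b'} {α : Path a a'}
    {β : Path b b'} (h : (p.trans β).Homotopic (α.trans q)) :
    ((α.symm.trans p).trans β).Homotopic q :=
  calc Homotopic ((α.symm.trans p).trans β) (α.symm.trans (p.trans β)) := .trans_assoc _ _ _
    Homotopic _ (α.symm.trans (α.trans q)) := (Homotopic.refl _).hcomp h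
    Homotopic _ ((α.symm.trans α).trans q) := (Homotopic.trans_assoc _ _ _).symm
    Homotopic _ ((Path.refl a').trans q) := (Homotopic.symm_trans α).hcomp (.refl q)
    Homotopic _ q := .refl_trans q

theorem exists_homotopy_symm_trans_trans (p : Path a b) (α : Path a a') (β : Path b b') :
    ∃ H : p.toContinuousMap.Homotopy ((α.symm.trans p).trans β).toContinuousMap,
      ∀ s, H (s, 0) = α s ∧ H (s, 1) = β s := by
  -- `H (s, ·)` traverses `(α⁻¹ · p) · β` over `[(1 - s) / 4, (1 + s) / 2]`;
  -- at `s = 0` this is exactly the `p`-segment `[1/4, 1/2]`.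
  refine ⟨{ toFun := fun st => ((α.symm.trans p).trans β).extend
              ((1 - st.1) / 4 + st.2 * (1 + 3 * st.1) / 4)
            map_zero_left := fun t => ?_, map_one_left := fun t => ?_ }, fun s => ⟨?_, ?_⟩⟩
  · have ht₀ := nonneg t; have ht₁ := le_one t
    simp only [Set.Icc.coe_zero, coe_toContinuousMap]
    rw [extend_trans_of_le_half _ _ (by linarith), extend_trans_of_half_le _ _ (by linarith)]
    convert p.extend_extends' t using 2
    ring
  · simp only [Set.Icc.coe_one, coe_toContinuousMap]
    convert ((α.symm.trans p).trans β).extend_extends' t using 2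
    ring
  · have hs₀ := nonneg s; have hs₁ := le_one s
    change ((α.symm.trans p).trans β).extend ((1 - s) / 4 + ((0 : I) : ℝ) * (1 + 3 * s) / 4) = _
    simp only [Set.Icc.coe_zero]
    rw [extend_trans_of_le_half _ _ (by linarith), extend_trans_of_le_half _ _ (by linarith),
      extend_symm_apply]
    convert α.extend_extends' s using 2
    ring
  · have hs₀ := nonneg s; have hs₁ := le_one s
    change ((α.symm.trans p).trans β).extend ((1 - s) / 4 + ((1 : I) : ℝ) * (1 + 3 * s) / 4) = _
    simp only [Set.Icc.coe_one]
    rw [extend_trans_of_half_le _ _ (by linarith)]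
    convert β.extend_extends' s using 2
    ring

end Path

section

variable {M : Type*} [TopologicalSpace M] {f : M → M} {k : ℕ} [NeZero k]

theorem joined_hoP_iff_exists_homotopy (x y : hoP f k) :
    Joined x y ↔
      ∃ F : ∀ i, (x.1 i).Homotopy (y.1 i), ∀ i s, f (F (i + 1) (s, 0)) = F i (s, 1) := by
  constructor
  · rintro ⟨γ⟩
    have hγ (i : Fin k) : Continuous fun s => (γ s : Fin k → C(I, M)) i :=
      (continuous_apply i).comp (continuous_subtype_val.comp γ.continuous)
    refine ⟨fun i =>
      { toFun := fun st => (γ st.1).1 i st.2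
        continuous_toFun := by have := hγ i; fun_prop
        map_zero_left := by simp
        map_one_left := by simp }, fun i s => (γ s).2 i⟩
  · rintro ⟨F, hF⟩
    refine ⟨{ toFun := fun s => ⟨fun i => (F i).curry s, fun i => hF i s⟩
              continuous_toFun := by fun_prop
              source' := ?_
              target' := ?_ }⟩
    all_goals ext; simp

theorem joined_hoP_of_homotopyRel {x y : hoP f k}
    (F : ∀ i, (x.1 i).HomotopyRel (y.1 i) {0, 1}) : Joined x y :=
  (joined_hoP_iff_exists_homotopy x y).2 ⟨fun i => (F i).toHomotopy, fun i s => by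
    simp [(F _).eq_fst, x.2 i]⟩

end

/-- Two points `λ, γ` of `hoP_k(f)` lie in the same path component of `hoP_k(f)`
iff there are paths `α_i` from `λ_i(0)` to `γ_i(0)` such that each concatenation
`λ_i · (f ∘ α_{i+1})` is path-homotopic rel endpoints to `α_i · γ_i`. -/
theorem hoP_joined_iff {M : Type*} [TopologicalSpace M] (f : M → M)
    (hf : Continuous f) (k : ℕ) [NeZero k] (x y : hoP f k) :
    Joined x y ↔
      ∃ α : (i : Fin k) → Path ((x.1 i) 0) ((y.1 i) 0),
        ∀ i : Fin k,
          Path.Homotopic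
            ((toPath (x.1 i)).trans
              (((α (i + 1)).map hf).cast (x.2 i).symm (y.2 i).symm))
            ((α i).trans (toPath (y.1 i))) := by
  constructor
  · intro hxy
    obtain ⟨F, hF⟩ := (joined_hoP_iff_exists_homotopy x y).1 hxy
    refine ⟨fun i => (F i).evalAt 0, fun i => ?_⟩
    convert Path.Homotopic.map_trans_evalAt (F i) Path.id using 2 <;> ext s
    exacts [rfl, hF i s, rfl]
  · rintro ⟨α, h⟩
    let β (i : Fin k) : Path (x.1 i 1) (y.1 i 1) :=
      ((α (i + 1)).map hf).cast (x.2 i).symm (y.2 i).symm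
    let Q (i : Fin k) : Path (y.1 i 0) (y.1 i 1) :=
      ((α i).symm.trans (toPath (x.1 i))).trans (β i)
    have hQ : (fun i => (Q i).toContinuousMap) ∈ hoP f k := fun i => by simp [Q, y.2 i]
    choose F hF using fun i => (toPath (x.1 i)).exists_homotopy_symm_trans_trans (α i) (β i)
    have hxQ : Joined x ⟨_, hQ⟩ := (joined_hoP_iff_exists_homotopy _ _).2
      ⟨F, fun i s => (congrArg f (hF (i + 1) s).1).trans (hF i s).2.symm⟩
    have hQy : Joined ⟨_, hQ⟩ y :=
      joined_hoP_of_homotopyRel fun i => (h i).symm_trans_trans_of_trans.some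
    exact hxQ.trans hQy
end
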